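/- Let T be a weighted rooted tree, and let C be a connected cluster of diameter at most Δ containing a vertex r_C that is an ancestor of all vertices of C. Suppose the shortest path from r_C to the portal set P stays within descendants of r_C and all clusters it intersects are assigned to portal p. Then every vertex v ∈ C satisfies d_{T[f^{-1}(p)]}(v, p) ≤ d_T(v, P) + 2Δ, where f^{-1}(p) is the union of the assigned clusters (including C). -/

import Mathlib

/-- Cost of a walk (list of vertices) in a weighted graph with weights `w`. -/
noncomputable def walkCost {V : Type*} (w : V → V → ENNReal) : List V → ENNReal
  | [] => 0
  | [_] => 0
  | a :: b :: l => w a b + walkCost w (b :: l)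

/-- `l` is a walk from `u` to `v` staying inside the vertex set `S`. -/
def IsWalkIn {V : Type*} (S : Set V) (u v : V) (l : List V) : Prop :=
  l.head? = some u ∧ l.getLast? = some v ∧ ∀ x ∈ l, x ∈ S

/-- Shortest-path distance between `u` and `v` in the subgraph induced on `S`
    of the weighted graph with weights `w` (⊤ if there is no walk). -/
noncomputable def gdist {V : Type*} (w : V → V → ENNReal) (S : Set V) (u v : V) : ENNReal :=
  ⨅ (l : List V) (_ : IsWalkIn S u v l), walkCost w l

/-!
Route through the root `rC` of the cluster: `d_A(v, p) ≤ d_A(v, rC) + d_A(rC, p)`. The first term is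
at most `Δ` because walks inside `C` are walks inside `A`, and the second is `d(rC, P)` by hypothesis,
which the triangle inequality bounds by `d(rC, v) + d(v, P) ≤ Δ + d(v, P)`.
-/

section WalkDistance

variable {V : Type*} (w : V → V → ENNReal) {S : Set V}

lemma walkCost_append_of_getLast? {l : List V} {m : V} (h : l.getLast? = some m) (t : List V) :
    walkCost w (l ++ t) = walkCost w l + walkCost w (m :: t) := by
  induction l with
  | nil => simp at h
  | cons a l ih =>
    cases l with
    | nil => simp_all [walkCost]
    | cons b l =>
      rw [List.getLast?_cons_cons] at h
      simp only [List.cons_append, walkCost] at ih ⊢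
      rw [ih h, add_assoc]

lemma IsWalkIn.append {u m v : V} {l₁ l₂ : List V} (h₁ : IsWalkIn S u m l₁)
    (h₂ : IsWalkIn S m v l₂) :
    IsWalkIn S u v (l₁ ++ l₂.tail) ∧
      walkCost w (l₁ ++ l₂.tail) = walkCost w l₁ + walkCost w l₂ := by
  obtain ⟨hu, hm, hS₁⟩ := h₁
  obtain ⟨hm', hv, hS₂⟩ := h₂
  obtain ⟨t, rfl⟩ := List.head?_eq_some_iff.1 hm'
  refine ⟨⟨?_, ?_, ?_⟩, walkCost_append_of_getLast? w hm t⟩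
  · cases l₁ with
    | nil => simp at hu
    | cons a l => simpa using hu
  · cases t with
    | nil => simpa [hm] using hv
    | cons b t => simpa [List.getLast?_append] using hv
  · intro x hx
    rcases List.mem_append.1 hx with hx | hx
    · exact hS₁ x hx
    · exact hS₂ x (List.mem_cons_of_mem m hx)

lemma gdist_le_gdist_of_subset {S' : Set V} (h : S ⊆ S') (u v : V) :
    gdist w S' u v ≤ gdist w S u v :=
  le_iInf₂ fun l hl => iInf₂_le l ⟨hl.1, hl.2.1, fun x hx => h (hl.2.2 x hx)⟩

lemma gdist_triangle (u m v : V) : gdist w S u v ≤ gdist w S u m + gdist w S m v :=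
  ENNReal.le_iInf₂_add_iInf₂ fun _ h₁ _ h₂ =>
    (h₁.append w h₂).2 ▸ iInf₂_le _ (h₁.append w h₂).1

lemma iInf_gdist_le_gdist_add_iInf_gdist (P : Set V) (u v : V) :
    ⨅ q ∈ P, gdist w S u q ≤ gdist w S u v + ⨅ q ∈ P, gdist w S v q := by
  rw [ENNReal.add_iInf₂]
  exact iInf₂_mono fun q _ => gdist_triangle w u v q

end WalkDistance

theorem stmt10_general {V : Type*}
    (w : V → V → ENNReal)
    (P C A : Set V) (hCA : C ⊆ A) (Δ : ENNReal)
    (v rC : V) (hv : v ∈ C) (hrC : rC ∈ C)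
    (hdiam : ∀ x ∈ C, ∀ y ∈ C, gdist w C x y ≤ Δ)
    (p : V)
    (hpath : gdist w A rC p = ⨅ q ∈ P, gdist w Set.univ rC q) :
    gdist w A v p ≤ (⨅ q ∈ P, gdist w Set.univ v q) + 2 * Δ := by
  have hvr : gdist w A v rC ≤ Δ :=
    (gdist_le_gdist_of_subset w hCA v rC).trans (hdiam v hv rC hrC)
  have hrv : gdist w Set.univ rC v ≤ Δ :=
    (gdist_le_gdist_of_subset w C.subset_univ rC v).trans (hdiam rC hrC v hv)
  calc gdist w A v p ≤ gdist w A v rC + gdist w A rC p := gdist_triangle w v rC p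
    _ ≤ Δ + (Δ + ⨅ q ∈ P, gdist w Set.univ v q) := by
      rw [hpath]
      gcongr
      exact (iInf_gdist_le_gdist_add_iInf_gdist w P rC v).trans (by gcongr)
    _ = (⨅ q ∈ P, gdist w Set.univ v q) + 2 * Δ := by ring

/-- Monotone-cluster case on a weighted tree: C is a connected cluster of
    diameter ≤ Δ with root-most vertex r_C, contained in the union A of clusters assigned
    to portal p, and the shortest path from r_C to the portal set P realizes d(r_C,P)
    inside A (it stays among descendants of r_C, all assigned to p).  Then every v ∈ C
    satisfies d_{T[A]}(v,p) ≤ d_T(v,P) + 2Δ. -/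
theorem stmt10 {V : Type*} [Fintype V] (T : SimpleGraph V) (hT : T.IsTree)
    (w : V → V → ENNReal)
    (hwsymm : ∀ u v, w u v = w v u)
    (hwE : ∀ u v, ¬ T.Adj u v → w u v = ⊤)
    (P C A : Set V) (hCA : C ⊆ A) (Δ : ENNReal)
    (v rC : V) (hv : v ∈ C) (hrC : rC ∈ C)
    (hdiam : ∀ x ∈ C, ∀ y ∈ C, gdist w C x y ≤ Δ)
    (p : V) (hp : p ∈ P) (hpA : p ∈ A)
    (hpath : gdist w A rC p = ⨅ q ∈ P, gdist w Set.univ rC q) :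
    gdist w A v p ≤ (⨅ q ∈ P, gdist w Set.univ v q) + 2 * Δ :=
  stmt10_general w P C A hCA Δ v rC hv hrC hdiam p hpath
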